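/- arXiv:1406.6920 — 2 statements merged into one kernel-verified Lean document; each statement's English description precedes it below -/
import Mathlib

section
/- Let A be an SHF(8; 6, 2, {1,3}) in standard form. Then at least six of the eight rows of A are of type 1; that is, the rows of A can be permuted so that each of the first six rows contains exactly one entry equal to 1. -/
/-- `A` is the representation matrix of an `SHF(N; n, 2, {1,w})`:
an `N × n` matrix with entries in `{0,1}` (here `Bool`) such that for every
column `c` and every `w`-element set `C` of columns with `c ∉ C`, there is a
row `r` with `A r c ≠ A r x` for every `x ∈ C`. -/
def IsSHF (N n w : ℕ) (A : Fin N → Fin n → Bool) : Prop :=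
  ∀ (c : Fin n) (C : Finset (Fin n)), C.card = w → c ∉ C →
    ∃ r : Fin N, ∀ x ∈ C, A r c ≠ A r x

/-- The type of row `r` of `A`: the number of entries of `r` equal to 1 (`true`). -/
def rowType {N n : ℕ} (A : Fin N → Fin n → Bool) (r : Fin N) : ℕ :=
  (Finset.univ.filter fun c => A r c = true).card

/-- `A` is in standard form: every row has at most `n/2` entries equal to 1. -/
def StandardForm {N n : ℕ} (A : Fin N → Fin n → Bool) : Prop :=
  ∀ r : Fin N, 2 * rowType A r ≤ n

/-- `A` is a permutation matrix of degree `N`: exactly one entry equal to 1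
in each row and in each column. -/
def IsPermMatrix {N : ℕ} (A : Fin N → Fin N → Bool) : Prop :=
  (∀ r : Fin N, ∃! c : Fin N, A r c = true) ∧
  (∀ c : Fin N, ∃! r : Fin N, A r c = true)

/-- Row `r` separates the column pair `({c}, C)`. -/
def Separates {N n : ℕ} (A : Fin N → Fin n → Bool) (r : Fin N)
    (c : Fin n) (C : Finset (Fin n)) : Prop :=
  ∀ x ∈ C, A r c ≠ A r x

/-- The number of column pairs `({c}, C)` with `|C| = w` and `c ∉ C`
that are separated by row `r`. -/
def sepCount {N n : ℕ} (A : Fin N → Fin n → Bool) (w : ℕ) (r : Fin N) : ℕ :=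
  (Finset.univ.filter fun p : Fin n × Finset (Fin n) =>
    p.2.card = w ∧ p.1 ∉ p.2 ∧ ∀ x ∈ p.2, A r p.1 ≠ A r x).card

/-- The number of column pairs `({c}, C)` with `|C| = w` and `c ∉ C`
that are separated by both rows `r₁` and `r₂`. -/
def sepCount2 {N n : ℕ} (A : Fin N → Fin n → Bool) (w : ℕ) (r₁ r₂ : Fin N) : ℕ :=
  (Finset.univ.filter fun p : Fin n × Finset (Fin n) =>
    p.2.card = w ∧ p.1 ∉ p.2 ∧
      (∀ x ∈ p.2, A r₁ p.1 ≠ A r₁ x) ∧ (∀ x ∈ p.2, A r₂ p.1 ≠ A r₂ x)).card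

/-- The overlap of rows `r₁` and `r₂`: the number of columns in which
both rows have entry 1. -/
def overlap {N n : ℕ} (A : Fin N → Fin n → Bool) (r₁ r₂ : Fin N) : ℕ :=
  (Finset.univ.filter fun c => A r₁ c = true ∧ A r₂ c = true).card

open Finset

namespace SHF15

/-- penalty function: number of 3-subsets of a 5-set containing a fixed k-subset. -/
def pen : ℕ → ℕ := fun k =>
  if k = 0 then 10 else if k = 1 then 6 else if k = 2 then 3 else if k = 3 then 1 else 0

lemma pen_anti {k l : ℕ} (h : k ≤ l) : pen l ≤ pen k := by
  unfold pen; split_ifs <;> omega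

lemma penL1 (u k : ℕ) (hu1 : 1 ≤ u) (hu3 : u ≤ 3) :
    3 + u + Nat.choose u 2 ≤ u * k + pen k := by
  rcases le_or_gt k 3 with hk | hk
  · interval_cases u <;> interval_cases k <;> simp [pen, Nat.choose] <;> omega
  · have h4 : 4 ≤ k := hk
    have : u * 4 ≤ u * k := Nat.mul_le_mul_left u h4
    interval_cases u <;> simp [Nat.choose] at * <;> omega

lemma penL2 (u k : ℕ) (hu4 : 4 ≤ u) (hu6 : u ≤ 6) :
    2 * u + 6 ≤ u * k + 2 * pen k := by
  rcases le_or_gt k 3 with hk | hk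
  · interval_cases u <;> interval_cases k <;> simp [pen] <;> omega
  · have h4 : 4 ≤ k := hk
    have : u * 4 ≤ u * k := Nat.mul_le_mul_left u h4
    omega

lemma key (S : Finset (Finset (Fin 6))) (hcard : S.card ≤ 8)
    (hsize : ∀ s ∈ S, s.card ≤ 3)
    (hcov : ∀ (c : Fin 6) (C : Finset (Fin 6)), C.card = 3 → c ∉ C →
      ∃ s ∈ S, (c ∈ s ∧ Disjoint C s) ∨ (c ∉ s ∧ C ⊆ s)) :
    ∀ c : Fin 6, ({c} : Finset (Fin 6)) ∈ S := by
  by_contra hcon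
  push_neg at hcon
  obtain ⟨c₀, hc₀⟩ := hcon
  classical
  set U : Finset (Fin 6) := univ.filter (fun c => ({c} : Finset (Fin 6)) ∉ S) with hU
  set u : ℕ := U.card with hu
  have hc₀U : c₀ ∈ U := by simp [hU, hc₀]
  have hu1 : 1 ≤ u := Finset.card_pos.mpr ⟨c₀, hc₀U⟩
  have hu6 : u ≤ 6 := by
    calc U.card ≤ (univ : Finset (Fin 6)).card := card_filter_le _ _
    _ = 6 := by simp
  set S1 : Finset (Finset (Fin 6)) := S.filter (fun s => s.card = 1) with hS1
  set S2 : Finset (Finset (Fin 6)) := S.filter (fun s => s.card = 2) with hS2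
  set S3 : Finset (Finset (Fin 6)) := S.filter (fun s => s.card = 3) with hS3
  -- Step A : S1.card + u = 6
  have stepA : S1.card + u = 6 := by
    have himg : S1 = (univ.filter (fun c : Fin 6 => ({c} : Finset (Fin 6)) ∈ S)).image
        (fun c => ({c} : Finset (Fin 6))) := by
      ext s
      simp only [hS1, mem_filter, mem_image, mem_univ, true_and]
      constructor
      · rintro ⟨hs, hs1⟩
        obtain ⟨a, rfl⟩ := card_eq_one.mp hs1
        exact ⟨a, hs, rfl⟩
      · rintro ⟨a, ha, rfl⟩
        exact ⟨ha, card_singleton a⟩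
    have hinj : Set.InjOn (fun c : Fin 6 => ({c} : Finset (Fin 6)))
        (univ.filter (fun c : Fin 6 => ({c} : Finset (Fin 6)) ∈ S)) := by
      intro a _ b _ hab
      simpa using hab
    have h1 : S1.card = (univ.filter (fun c : Fin 6 => ({c} : Finset (Fin 6)) ∈ S)).card := by
      rw [himg, card_image_of_injOn hinj]
    have h2 := Finset.card_filter_add_card_filter_not
      (s := (univ : Finset (Fin 6))) (p := fun c => ({c} : Finset (Fin 6)) ∈ S)
    simp only [card_univ, Fintype.card_fin] at h2
    rw [h1, hu, hU]
    convert h2 using 2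
  -- Step B : S1.card + S2.card + S3.card ≤ 8
  have stepB : S1.card + S2.card + S3.card ≤ 8 := by
    have hsub : S1 ∪ S2 ∪ S3 ⊆ S := by
      intro s hs
      simp only [mem_union, hS1, hS2, hS3, mem_filter] at hs
      tauto
    have hd12 : Disjoint S1 S2 := by
      rw [disjoint_left]; intro s h1 h2
      simp only [hS1, hS2, mem_filter] at h1 h2; omega
    have hd123 : Disjoint (S1 ∪ S2) S3 := by
      rw [disjoint_left]; intro s h1 h2
      simp only [mem_union, hS1, hS2, hS3, mem_filter] at h1 h2; omega
    calc S1.card + S2.card + S3.card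
        = (S1 ∪ S2).card + S3.card := by rw [card_union_of_disjoint hd12]
      _ = (S1 ∪ S2 ∪ S3).card := (card_union_of_disjoint hd123).symm
      _ ≤ S.card := card_le_card hsub
      _ ≤ 8 := hcard
  -- partners and counts
  set P : Fin 6 → Finset (Fin 6) := fun c => (univ.erase c).filter
    (fun b => insert c ({b} : Finset (Fin 6)) ∈ S) with hP
  set a : Fin 6 → ℕ := fun c => (S2.filter (fun s => c ∈ s)).card with ha
  -- |P c| ≤ a c
  have hPa : ∀ c : Fin 6, (P c).card ≤ a c := by
    intro c
    apply card_le_card_of_injOn (f := fun b => insert c ({b} : Finset (Fin 6)))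
    · intro b hb
      simp only [hP, Finset.mem_coe, mem_filter, mem_erase] at hb
      obtain ⟨⟨hbc, _⟩, hbS⟩ := hb
      simp only [hS2, Finset.mem_coe, mem_filter]
      refine ⟨⟨hbS, ?_⟩, ?_⟩
      · rw [card_insert_of_notMem (by simp only [mem_singleton]; exact fun h => hbc h.symm),
          card_singleton]
      · exact mem_insert_self c _
    · intro b hb b' hb' hbb
      have hbc : b ≠ c := (mem_erase.mp (mem_of_mem_filter _ hb)).1
      have hbb' : insert c ({b} : Finset (Fin 6)) = insert c ({b'} : Finset (Fin 6)) := hbb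
      have hb1 : b ∈ insert c ({b'} : Finset (Fin 6)) := by
        rw [← hbb']; exact mem_insert_of_mem (mem_singleton_self b)
      simp only [mem_insert, mem_singleton] at hb1
      rcases hb1 with h | h
      · exact absurd h hbc
      · exact h
  -- Step D/E : for c ∈ U, pen ((P c).card) ≤ S3.card
  have stepD : ∀ c ∈ U, pen ((P c).card) ≤ S3.card := by
    intro c hcU
    have hcS : ({c} : Finset (Fin 6)) ∉ S := by
      simpa [hU] using hcU
    have hXcard : (univ.erase c : Finset (Fin 6)).card = 5 := by simp
    have hPX : P c ⊆ univ.erase c := filter_subset _ _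
    set T : Finset (Finset (Fin 6)) :=
      ((univ.erase c).powersetCard 3).filter (fun C => P c ⊆ C) with hT
    have hT3 : T.card ≤ S3.card := by
      have hmap : T ⊆ S3.image (fun s => if c ∈ s then sᶜ else s) := by
        intro C hC
        obtain ⟨hCp, hPC⟩ := mem_filter.mp hC
        obtain ⟨hCX, hC3⟩ := mem_powersetCard.mp hCp
        have hcC : c ∉ C := fun h => (mem_erase.mp (hCX h)).1 rfl
        obtain ⟨s, hsS, hsep⟩ := hcov c C hC3 hcC
        have hs3 : s.card ≤ 3 := hsize s hsS
        rcases hsep with ⟨hcs, hdisj⟩ | ⟨hcs, hsub⟩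
        · have hscard : s.card = 3 := by
            rcases (show s.card = 1 ∨ s.card = 2 ∨ s.card = 3 by
              have := card_pos.mpr ⟨c, hcs⟩; omega) with h1 | h2 | h3
            · exfalso
              obtain ⟨b, rfl⟩ := card_eq_one.mp h1
              rw [mem_singleton] at hcs
              exact hcS (hcs ▸ hsS)
            · exfalso
              have he : (s.erase c).card = 1 := by rw [card_erase_of_mem hcs, h2]
              obtain ⟨b, hb⟩ := card_eq_one.mp he
              have hbc : b ≠ c := by
                have : b ∈ s.erase c := hb ▸ mem_singleton_self b
                exact (mem_erase.mp this).1
              have hsb : s = insert c {b} := by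
                rw [← insert_erase hcs, hb]
              have hbP : b ∈ P c := by
                refine mem_filter.mpr ⟨mem_erase.mpr ⟨hbc, mem_univ b⟩, ?_⟩
                rw [← hsb]; exact hsS
              have hbC : b ∈ C := hPC hbP
              have hbs : b ∈ s := by rw [hsb]; exact mem_insert_of_mem (mem_singleton_self b)
              exact (disjoint_left.mp hdisj hbC) hbs
            · exact h3
          refine mem_image.mpr ⟨s, mem_filter.mpr ⟨hsS, hscard⟩, ?_⟩
          rw [if_pos hcs]
          have hsubc : C ⊆ sᶜ := fun x hx => mem_compl.mpr (disjoint_left.mp hdisj hx)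
          have hcc : sᶜ.card = 3 := by
            rw [card_compl, hscard]
            simp
          exact (eq_of_subset_of_card_le hsubc (by rw [hcc, hC3])).symm
        · have hCs : C = s := eq_of_subset_of_card_le hsub (by omega)
          refine mem_image.mpr ⟨s, mem_filter.mpr ⟨hsS, by rw [← hCs, hC3]⟩, ?_⟩
          rw [if_neg hcs, hCs]
      calc T.card ≤ (S3.image (fun s => if c ∈ s then sᶜ else s)).card := card_le_card hmap
        _ ≤ S3.card := card_image_le
    rcases le_or_gt 4 ((P c).card) with hk4 | hk3
    · have : pen ((P c).card) = 0 := by unfold pen; split_ifs <;> omega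
      omega
    · have hk3' : (P c).card ≤ 3 := by omega
      have hdisjD : ∀ D ∈ ((univ.erase c) \ P c).powersetCard (3 - (P c).card),
          Disjoint (P c) D := by
        intro D hD
        obtain ⟨hDsub, _⟩ := mem_powersetCard.mp hD
        rw [disjoint_right]
        intro x hxD
        exact (mem_sdiff.mp (hDsub hxD)).2
      have hbig : (((univ.erase c) \ P c).powersetCard (3 - (P c).card)).card ≤ T.card := by
        apply card_le_card_of_injOn (f := fun D => P c ∪ D)
        · intro D hD
          obtain ⟨hDsub, hDcard⟩ := mem_powersetCard.mp hD
          refine mem_filter.mpr ⟨mem_powersetCard.mpr ⟨?_, ?_⟩, subset_union_left⟩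
          · exact union_subset hPX (hDsub.trans sdiff_subset)
          · rw [card_union_of_disjoint (hdisjD D hD), hDcard]; omega
        · intro D hD D' hD' hDD
          have h1 : (P c ∪ D) \ P c = (P c ∪ D') \ P c := by
            have hDD' : P c ∪ D = P c ∪ D' := hDD
            rw [hDD']
          rwa [union_sdiff_cancel_left (hdisjD D hD),
            union_sdiff_cancel_left (hdisjD D' hD')] at h1
      have hcards : (((univ.erase c) \ P c).powersetCard (3 - (P c).card)).card
          = Nat.choose (5 - (P c).card) (3 - (P c).card) := by
        rw [card_powersetCard, card_sdiff_of_subset hPX, hXcard]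
      have hpen : pen ((P c).card) = Nat.choose (5 - (P c).card) (3 - (P c).card) := by
        set k := (P c).card with hk
        have hk0 : 0 ≤ k := Nat.zero_le k
        interval_cases k <;> decide
      omega
  -- pen a bound
  have hpen_a : ∀ c ∈ U, pen (a c) ≤ S3.card := by
    intro c hc
    exact le_trans (pen_anti (hPa c)) (stepD c hc)
  -- double counting sums
  have hsum_eq : ∑ c ∈ U, a c = ∑ s ∈ S2, (U.filter (fun c => c ∈ s)).card := by
    simp only [ha, card_filter]
    rw [Finset.sum_comm]
  have hsum1 : ∑ c ∈ U, a c ≤ 2 * S2.card := by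
    rw [hsum_eq]
    calc ∑ s ∈ S2, (U.filter (fun c => c ∈ s)).card
        ≤ ∑ s ∈ S2, 2 := by
          apply Finset.sum_le_sum
          intro s hs
          simp only [hS2, mem_filter] at hs
          calc (U.filter (fun c => c ∈ s)).card ≤ (s.filter (fun c => c ∈ U)).card := by
                apply card_le_card
                intro x hx
                simp only [mem_filter] at hx ⊢
                exact ⟨hx.2, hx.1⟩
            _ ≤ s.card := card_filter_le _ _
            _ = 2 := hs.2
      _ = 2 * S2.card := by rw [Finset.sum_const, smul_eq_mul, mul_comm]
  have hsum2 : ∑ c ∈ U, a c ≤ S2.card + Nat.choose u 2 := by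
    rw [hsum_eq]
    have step1 : ∀ s ∈ S2, (U.filter (fun c => c ∈ s)).card
        ≤ 1 + (if s ⊆ U then 1 else 0) := by
      intro s hs
      have hs2 : s.card = 2 := (mem_filter.mp hs).2
      by_cases hsu : s ⊆ U
      · simp only [hsu, if_true]
        have : (U.filter (fun c => c ∈ s)).card ≤ s.card := by
          apply card_le_card; intro x hx; exact (mem_filter.mp hx).2
        omega
      · simp only [hsu, if_false]
        obtain ⟨x, hxs, hxU⟩ := not_subset.mp hsu
        have : (U.filter (fun c => c ∈ s)).card ≤ (s.erase x).card := by
          apply card_le_card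
          intro y hy
          obtain ⟨hyU, hys⟩ := mem_filter.mp hy
          exact mem_erase.mpr ⟨fun h => hxU (h ▸ hyU), hys⟩
        have he : (s.erase x).card = 1 := by rw [card_erase_of_mem hxs, hs2]
        omega
    calc ∑ s ∈ S2, (U.filter (fun c => c ∈ s)).card
        ≤ ∑ s ∈ S2, (1 + if s ⊆ U then 1 else 0) := Finset.sum_le_sum step1
      _ = S2.card + (S2.filter (fun s => s ⊆ U)).card := by
          rw [Finset.sum_add_distrib, Finset.sum_const, smul_eq_mul, mul_one,
            ← Finset.card_filter]
      _ ≤ S2.card + Nat.choose u 2 := by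
          have hsub : S2.filter (fun s => s ⊆ U) ⊆ U.powersetCard 2 := by
            intro s hs
            obtain ⟨hs', hsu⟩ := mem_filter.mp hs
            exact mem_powersetCard.mpr ⟨hsu, (mem_filter.mp hs').2⟩
          have h := card_le_card hsub
          rw [card_powersetCard, ← hu] at h
          omega
  -- min column
  obtain ⟨cm, hcmU, hcmmin⟩ := Finset.exists_min_image U a ⟨c₀, hc₀U⟩
  have hmin_sum : u * a cm ≤ ∑ c ∈ U, a c := by
    calc u * a cm = ∑ _c ∈ U, a cm := by rw [Finset.sum_const, smul_eq_mul]
      _ ≤ ∑ c ∈ U, a c := Finset.sum_le_sum (fun c hc => hcmmin c hc)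
  -- final : t2 + t3 ≥ u + 3
  have hfin : u + 3 ≤ S2.card + S3.card := by
    rcases le_or_gt u 3 with hu3 | hu4
    · have h1 := penL1 u (a cm) hu1 hu3
      have h2 : u * a cm ≤ S2.card + Nat.choose u 2 := le_trans hmin_sum hsum2
      have h3 : pen (a cm) ≤ S3.card := hpen_a cm hcmU
      have hch : Nat.choose u 2 ≤ 3 := by interval_cases u <;> simp [Nat.choose]
      omega
    · have h4u : 4 ≤ u := hu4
      have hkey : u * (2 * u + 6) ≤ u * (2 * S2.card) + u * (2 * S3.card) := by
        calc u * (2 * u + 6) = ∑ _c ∈ U, (2 * u + 6) := by rw [Finset.sum_const, smul_eq_mul]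
          _ ≤ ∑ c ∈ U, (u * a c + 2 * pen (a c)) := by
              apply Finset.sum_le_sum
              intro c hc
              exact penL2 u (a c) h4u hu6
          _ = u * (∑ c ∈ U, a c) + 2 * (∑ c ∈ U, pen (a c)) := by
              rw [Finset.sum_add_distrib, Finset.mul_sum, Finset.mul_sum]
          _ ≤ u * (2 * S2.card) + 2 * (∑ _c ∈ U, S3.card) := by
              gcongr with c hc
              exact hpen_a c hc
          _ = u * (2 * S2.card) + u * (2 * S3.card) := by
              rw [Finset.sum_const, smul_eq_mul]; ring
      have h2u : 2 * u + 6 ≤ 2 * S2.card + 2 * S3.card := by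
        have h' : u * (2 * u + 6) ≤ u * (2 * S2.card + 2 * S3.card) := by
          calc u * (2 * u + 6) ≤ u * (2 * S2.card) + u * (2 * S3.card) := hkey
            _ = u * (2 * S2.card + 2 * S3.card) := by ring
        exact Nat.le_of_mul_le_mul_left h' (by omega)
      omega
  omega

end SHF15

open Finset in
theorem stmt15 (A : Fin 8 → Fin 6 → Bool) (hA : IsSHF 8 6 3 A)
    (hstd : StandardForm A) :
    6 ≤ (Finset.univ.filter fun r : Fin 8 => rowType A r = 1).card := by
  classical
  set supp : Fin 8 → Finset (Fin 6) := fun r => univ.filter (fun c => A r c = true) with hsupp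
  set S : Finset (Finset (Fin 6)) := Finset.image supp univ with hS
  have hrt : ∀ r, rowType A r = (supp r).card := fun r => rfl
  have hcard : S.card ≤ 8 := by
    calc S.card ≤ (univ : Finset (Fin 8)).card := card_image_le
      _ = 8 := by simp
  have hsize : ∀ s ∈ S, s.card ≤ 3 := by
    intro s hs
    obtain ⟨r, _, rfl⟩ := mem_image.mp hs
    have := hstd r
    rw [hrt r] at this
    omega
  have hcov : ∀ (c : Fin 6) (C : Finset (Fin 6)), C.card = 3 → c ∉ C →
      ∃ s ∈ S, (c ∈ s ∧ Disjoint C s) ∨ (c ∉ s ∧ C ⊆ s) := by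
    intro c C hC3 hcC
    obtain ⟨r, hr⟩ := hA c C hC3 hcC
    refine ⟨supp r, mem_image_of_mem supp (mem_univ r), ?_⟩
    cases hb : A r c with
    | false =>
      right
      constructor
      · simp [hsupp, hb]
      · intro x hx
        have hne := hr x hx
        rw [hb] at hne
        have hx' : A r x = true := by
          cases hax : A r x
          · exact absurd (by rw [hax]) hne
          · rfl
        simp [hsupp, hx']
    | true =>
      left
      constructor
      · simp [hsupp, hb]
      · rw [disjoint_right]
        intro x hxs hxC
        have hne := hr x hxC
        rw [hb] at hne
        have hx' : A r x = true := by simpa [hsupp] using hxs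
        rw [hx'] at hne
        exact hne rfl
  have hsing : ∀ c : Fin 6, ({c} : Finset (Fin 6)) ∈ S := SHF15.key S hcard hsize hcov
  have hex : ∀ c : Fin 6, ∃ r : Fin 8, supp r = {c} := by
    intro c
    obtain ⟨r, _, hr⟩ := mem_image.mp (hsing c)
    exact ⟨r, hr⟩
  choose f hf using hex
  have h6 : (univ : Finset (Fin 6)).card
      ≤ (univ.filter fun r : Fin 8 => rowType A r = 1).card := by
    apply Finset.card_le_card_of_injOn f
    · intro c _
      simp only [Finset.mem_coe, mem_filter, mem_univ, true_and]
      rw [hrt, hf c, card_singleton]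
    · intro c _ c' _ hcc
      have h : ({c} : Finset (Fin 6)) = {c'} := by rw [← hf c, ← hf c', hcc]
      exact Finset.singleton_injective h
  simpa using h6
end

section
/- Let A be an SHF(8; 7, 2, {1,3}) in standard form. Then at least seven of the eight rows of A are of type 1; that is, the rows of A can be permuted so that each of the first seven rows contains exactly one entry equal to 1. -/
namespace SHF16
variable (A : Fin 8 → Fin 7 → Bool)
def S (r : Fin 8) : Finset (Fin 7) := Finset.univ.filter fun c => A r c = true
def good (c : Fin 7) : Prop := ∃ r, S A r = {c}
instance : DecidablePred (good A) := fun _ => inferInstanceAs (Decidable (∃ _, _))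
def E : Finset (Finset (Fin 7)) :=
  (Finset.univ.filter fun r => (S A r).card = 2).image (S A)
def F3 : Finset (Finset (Fin 7)) :=
  (Finset.univ.filter fun r => (S A r).card = 3).image (S A)
def ec (c : Fin 7) : ℕ := ((E A).filter fun s => c ∈ s).card
def fc (c : Fin 7) : ℕ := ((F3 A).filter fun s => c ∈ s).card
def gc (c : Fin 7) : ℕ := ((F3 A).filter fun s => c ∉ s).card


def D : Finset (Fin 7) := Finset.univ.filter fun c => ¬ good A c


lemma fc_add_gc (c : Fin 7) : fc A c + gc A c = (F3 A).card :=
  Finset.card_filter_add_card_filter_not _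

lemma mem_E_card {s : Finset (Fin 7)} (hs : s ∈ E A) : s.card = 2 := by
  simp only [E, Finset.mem_image, Finset.mem_filter] at hs
  obtain ⟨r, ⟨_, hr⟩, rfl⟩ := hs
  exact hr

lemma mem_F3_card {s : Finset (Fin 7)} (hs : s ∈ F3 A) : s.card = 3 := by
  simp only [F3, Finset.mem_image, Finset.mem_filter] at hs
  obtain ⟨r, ⟨_, hr⟩, rfl⟩ := hs
  exact hr

lemma sum_ec : ∑ c, ec A c = 2 * (E A).card := by
  unfold ec
  simp only [Finset.card_filter]
  rw [Finset.sum_comm]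
  have : ∀ s ∈ E A, (∑ c : Fin 7, if c ∈ s then 1 else 0) = 2 := by
    intro s hs
    rw [Finset.sum_boole]
    simp only [Nat.cast_id]
    rw [Finset.filter_mem_eq_inter, Finset.univ_inter]
    exact mem_E_card A hs
  rw [Finset.sum_congr rfl this, Finset.sum_const, smul_eq_mul, Nat.mul_comm]

lemma sum_fc : ∑ c, fc A c = 3 * (F3 A).card := by
  unfold fc
  simp only [Finset.card_filter]
  rw [Finset.sum_comm]
  have : ∀ s ∈ F3 A, (∑ c : Fin 7, if c ∈ s then 1 else 0) = 3 := by
    intro s hs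
    rw [Finset.sum_boole]
    simp only [Nat.cast_id]
    rw [Finset.filter_mem_eq_inter, Finset.univ_inter]
    exact mem_F3_card A hs
  rw [Finset.sum_congr rfl this, Finset.sum_const, smul_eq_mul, Nat.mul_comm]


lemma good_card_le :
    (Finset.univ.filter (good A)).card ≤
      (Finset.univ.filter fun r : Fin 8 => rowType A r = 1).card := by
  classical
  apply Finset.card_le_card_of_injOn (fun c => if h : good A c then h.choose else 0)
  · intro c hc
    rw [Finset.mem_coe, Finset.mem_filter] at hc
    obtain ⟨-, hg⟩ := hc
    simp only [dif_pos hg]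
    have hs : S A hg.choose = {c} := hg.choose_spec
    simp only [Finset.mem_coe, Finset.mem_filter, Finset.mem_univ, true_and]
    show (S A hg.choose).card = 1
    rw [hs, Finset.card_singleton]
  · intro c₁ h₁ c₂ h₂ heq
    rw [Finset.mem_coe, Finset.mem_filter] at h₁ h₂
    obtain ⟨-, hg₁⟩ := h₁; obtain ⟨-, hg₂⟩ := h₂
    simp only [dif_pos hg₁, dif_pos hg₂] at heq
    have e1 : S A hg₁.choose = {c₁} := hg₁.choose_spec
    have e2 : S A hg₂.choose = {c₂} := hg₂.choose_spec
    rw [heq, e2] at e1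
    exact (Finset.singleton_injective e1).symm

lemma budget :
    (Finset.univ.filter fun r : Fin 8 => rowType A r = 1).card
      + (E A).card + (F3 A).card ≤ 8 := by
  have h1 : (E A).card ≤ (Finset.univ.filter fun r : Fin 8 => (S A r).card = 2).card :=
    Finset.card_image_le
  have h2 : (F3 A).card ≤ (Finset.univ.filter fun r : Fin 8 => (S A r).card = 3).card :=
    Finset.card_image_le
  have he : (Finset.univ.filter fun r : Fin 8 => rowType A r = 1)
      = Finset.univ.filter fun r : Fin 8 => (S A r).card = 1 := rfl
  rw [he]
  have key : ∀ P Q R : Fin 8 → Prop, (∀ r, ¬(P r ∧ Q r)) → (∀ r, ¬(P r ∧ R r)) →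
      (∀ r, ¬(Q r ∧ R r)) → ∀ [DecidablePred P] [DecidablePred Q] [DecidablePred R],
      (Finset.univ.filter P).card + (Finset.univ.filter Q).card
        + (Finset.univ.filter R).card ≤ 8 := by
    intro P Q R hPQ hPR hQR _ _ _
    have d1 : Disjoint (Finset.univ.filter P) (Finset.univ.filter Q) := by
      rw [Finset.disjoint_left]
      intro a ha hb
      rw [Finset.mem_filter] at ha hb
      exact hPQ a ⟨ha.2, hb.2⟩
    have d2 : Disjoint (Finset.univ.filter P ∪ Finset.univ.filter Q)
        (Finset.univ.filter R) := by
      rw [Finset.disjoint_left]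
      intro a ha hb
      rw [Finset.mem_union] at ha
      rw [Finset.mem_filter] at hb
      rcases ha with ha | ha <;> rw [Finset.mem_filter] at ha
      · exact hPR a ⟨ha.2, hb.2⟩
      · exact hQR a ⟨ha.2, hb.2⟩
    have := Finset.card_union_of_disjoint d2
    rw [Finset.card_union_of_disjoint d1] at this
    have hle : (Finset.univ.filter P ∪ Finset.univ.filter Q
        ∪ Finset.univ.filter R).card ≤ 8 := by
      refine le_trans (Finset.card_le_card (Finset.subset_univ _)) ?_
      simp
    omega
  have := key (fun r => (S A r).card = 1) (fun r => (S A r).card = 2)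
    (fun r => (S A r).card = 3) (fun r => by omega) (fun r => by omega) (fun r => by omega)
  omega


def uu : ℕ → ℕ | 0 => 20 | 1 => 10 | 2 => 4 | _ => 1
def cap : ℕ → ℕ | 0 => 4 | 1 => 3 | 2 => 2 | _ => 1

lemma rowType_eq (r : Fin 8) : rowType A r = (S A r).card := rfl
variable {A}
lemma card_S_le (hstd : StandardForm A) (r : Fin 8) : (S A r).card ≤ 3 := by
  have := hstd r; rw [rowType_eq] at this; omega
lemma mem_S {r : Fin 8} {c : Fin 7} : c ∈ S A r ↔ A r c = true := by simp [S]

lemma cover (hA : IsSHF 8 7 3 A) (hstd : StandardForm A) (c : Fin 7)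
    (C : Finset (Fin 7)) (hC : C.card = 3) (hc : c ∉ C) :
    ∃ r, (c ∈ S A r ∧ ∀ x ∈ C, x ∉ S A r) ∨ (c ∉ S A r ∧ C = S A r) := by
  obtain ⟨r, hr⟩ := hA c C hC hc
  refine ⟨r, ?_⟩
  by_cases h : A r c = true
  · refine Or.inl ⟨mem_S.2 h, fun x hx => ?_⟩
    rw [mem_S]; intro hax
    exact hr x hx (h.trans hax.symm)
  · have h' : A r c = false := by revert h; cases A r c <;> simp
    refine Or.inr ⟨fun hcs => h (mem_S.1 hcs), ?_⟩
    have hsub : C ⊆ S A r := by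
      intro x hx
      rw [mem_S]
      have := hr x hx
      rw [h'] at this
      revert this; cases A r x <;> simp
    exact Finset.eq_of_subset_of_card_le hsub (by rw [hC]; exact card_S_le hstd r)

/-- The per-column counting inequality. -/
lemma percol (hA : IsSHF 8 7 3 A) (hstd : StandardForm A) (c : Fin 7)
    (hc : ¬ good A c) (hk : ec A c ≤ 3) :
    uu (ec A c) ≤ cap (ec A c) * fc A c + gc A c := by
  classical
  set k := ec A c with hkdef
  set Ec := (E A).filter (fun s => c ∈ s) with hEc
  -- each member of Ec erased at c is a singleton
  have hEc1 : ∀ s ∈ Ec, (s.erase c).card = 1 := by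
    intro s hs
    rw [hEc, Finset.mem_filter] at hs
    have h2 : s.card = 2 := by
      obtain ⟨hsE, -⟩ := hs
      simp only [E, Finset.mem_image, Finset.mem_filter] at hsE
      obtain ⟨r, ⟨-, hr⟩, rfl⟩ := hsE
      exact hr
    rw [Finset.card_erase_of_mem hs.2, h2]
  set B : Finset (Fin 7) := Ec.biUnion (fun s => s.erase c) with hBdef
  have hEcdisj : ∀ s ∈ Ec, ∀ t ∈ Ec, s ≠ t → Disjoint (s.erase c) (t.erase c) := by
    intro s hs t ht hst
    rw [Finset.disjoint_left]
    intro p hps hpt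
    apply hst
    obtain ⟨a, ha⟩ := Finset.card_eq_one.mp (hEc1 s hs)
    obtain ⟨b, hb⟩ := Finset.card_eq_one.mp (hEc1 t ht)
    rw [ha, Finset.mem_singleton] at hps
    rw [hb, Finset.mem_singleton] at hpt
    have hcs : c ∈ s := (Finset.mem_filter.mp hs).2
    have hct : c ∈ t := (Finset.mem_filter.mp ht).2
    calc s = insert c (s.erase c) := (Finset.insert_erase hcs).symm
      _ = insert c (t.erase c) := by rw [ha, hb, ← hps, ← hpt]
      _ = t := Finset.insert_erase hct
  have hBcard : B.card = k := by
    rw [hBdef, Finset.card_biUnion hEcdisj]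
    rw [Finset.sum_congr rfl hEc1, Finset.sum_const, smul_eq_mul, mul_one]
    rfl
  have hBsubM : B ⊆ Finset.univ.erase c := by
    intro p hp
    rw [hBdef, Finset.mem_biUnion] at hp
    obtain ⟨s, -, hps⟩ := hp
    exact Finset.mem_erase.mpr ⟨(Finset.mem_erase.mp hps).1, Finset.mem_univ p⟩
  have hMcard : (Finset.univ.erase c).card = 6 := by
    rw [Finset.card_erase_of_mem (Finset.mem_univ c)]; simp
  have hMBcard : (Finset.univ.erase c \ B).card = 6 - k := by
    rw [Finset.card_sdiff_of_subset hBsubM, hMcard, hBcard]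
  set W : Finset (Finset (Fin 7)) :=
    ((Finset.univ.erase c \ B).powersetCard (3 - k)).image (· ∪ B) with hWdef
  -- properties of members of W
  have hWmem : ∀ C' ∈ W, B ⊆ C' ∧ C' ⊆ Finset.univ.erase c ∧ C'.card = 3 := by
    intro C' hC'
    rw [hWdef, Finset.mem_image] at hC'
    obtain ⟨C'', hC'', rfl⟩ := hC'
    rw [Finset.mem_powersetCard] at hC''
    obtain ⟨hsub, hcard⟩ := hC''
    have hdisj : Disjoint C'' B := Finset.disjoint_left.mpr
      (fun x hx => (Finset.mem_sdiff.mp (hsub hx)).2)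
    refine ⟨Finset.subset_union_right, ?_, ?_⟩
    · intro x hx
      rcases Finset.mem_union.mp hx with h | h
      · exact (Finset.mem_sdiff.mp (hsub h)).1
      · exact hBsubM h
    · rw [Finset.card_union_of_disjoint hdisj, hcard, hBcard]; omega
  have hWcard : W.card = uu k := by
    rw [hWdef]
    rw [Finset.card_image_of_injOn ?_]
    · rw [Finset.card_powersetCard, hMBcard]
      interval_cases k <;> decide
    · intro x hx y hy hxy
      rw [Finset.mem_coe, Finset.mem_powersetCard] at hx hy
      have dx : Disjoint x B := Finset.disjoint_left.mpr
        (fun a ha => (Finset.mem_sdiff.mp (hx.1 ha)).2)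
      have dy : Disjoint y B := Finset.disjoint_left.mpr
        (fun a ha => (Finset.mem_sdiff.mp (hy.1 ha)).2)
      have : (x ∪ B) \ B = (y ∪ B) \ B := by simpa using congrArg (· \ B) hxy
      rwa [Finset.union_sdiff_cancel_right dx, Finset.union_sdiff_cancel_right dy] at this
  -- every member of W is covered by some size-3 support
  have hcover : ∀ C' ∈ W, ∃ s ∈ F3 A,
      (c ∈ s ∧ ∀ x ∈ C', x ∉ s.erase c) ∨ (c ∉ s ∧ C' = s) := by
    intro C' hC'
    obtain ⟨hBC', hC'M, hC'3⟩ := hWmem C' hC'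
    have hcC' : c ∉ C' := fun h => (Finset.mem_erase.mp (hC'M h)).1 rfl
    obtain ⟨r, hr⟩ := cover hA hstd c C' hC'3 hcC'
    rcases hr with ⟨hcr, hall⟩ | ⟨hcr, heq⟩
    · -- through case
      have h1 : 1 ≤ (S A r).card := Finset.card_pos.mpr ⟨c, hcr⟩
      have h3 : (S A r).card ≤ 3 := card_S_le hstd r
      interval_cases h : (S A r).card
      · -- card 1 : S A r = {c} : contradiction with bad column
        exfalso
        apply hc
        refine ⟨r, ?_⟩
        obtain ⟨a, ha⟩ := Finset.card_eq_one.mp h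
        rw [ha] at hcr ⊢
        rw [Finset.mem_singleton] at hcr
        rw [hcr]
      · -- card 2 : partner is in B ⊆ C', contradiction
        exfalso
        have hsE : S A r ∈ Ec := by
          rw [hEc, Finset.mem_filter]
          refine ⟨?_, hcr⟩
          rw [E, Finset.mem_image]
          exact ⟨r, Finset.mem_filter.mpr ⟨Finset.mem_univ r, h⟩, rfl⟩
        have hne : ((S A r).erase c).Nonempty := by
          rw [← Finset.card_pos, hEc1 _ hsE]; omega
        obtain ⟨p, hp⟩ := hne
        have hpB : p ∈ B := by
          rw [hBdef, Finset.mem_biUnion]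
          exact ⟨S A r, hsE, hp⟩
        exact hall p (hBC' hpB) (Finset.mem_of_mem_erase hp)
      · -- card 3
        refine ⟨S A r, ?_, Or.inl ⟨hcr, fun x hx hxe => hall x hx (Finset.mem_of_mem_erase hxe)⟩⟩
        rw [F3, Finset.mem_image]
        exact ⟨r, Finset.mem_filter.mpr ⟨Finset.mem_univ r, h⟩, rfl⟩
    · -- equal case
      refine ⟨S A r, ?_, Or.inr ⟨hcr, heq⟩⟩
      rw [F3, Finset.mem_image]
      refine ⟨r, Finset.mem_filter.mpr ⟨Finset.mem_univ r, ?_⟩, rfl⟩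
      rw [← heq, hC'3]
  -- union bound
  set P : Finset (Fin 7) → Finset (Fin 7) → Prop :=
    fun s C' => (c ∈ s ∧ ∀ x ∈ C', x ∉ s.erase c) ∨ (c ∉ s ∧ C' = s) with hPdef
  have hWsub : W ⊆ (F3 A).biUnion (fun s => W.filter (fun C' => P s C')) := by
    intro C' hC'
    rw [Finset.mem_biUnion]
    obtain ⟨s, hs, hPs⟩ := hcover C' hC'
    exact ⟨s, hs, Finset.mem_filter.mpr ⟨hC', hPs⟩⟩
  have hub : W.card ≤ ∑ s ∈ F3 A, (W.filter (fun C' => P s C')).card :=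
    le_trans (Finset.card_le_card hWsub) (Finset.card_biUnion_le)
  -- bound each term
  have hbound_in : ∀ s ∈ (F3 A).filter (fun s => c ∈ s),
      (W.filter (fun C' => P s C')).card ≤ cap k := by
    intro s hs
    rw [Finset.mem_filter] at hs
    obtain ⟨hsF, hcs⟩ := hs
    have hs3 : s.card = 3 := by
      simp only [F3, Finset.mem_image, Finset.mem_filter] at hsF
      obtain ⟨r, ⟨-, hr⟩, rfl⟩ := hsF
      exact hr
    have hse2 : (s.erase c).card = 2 := by rw [Finset.card_erase_of_mem hcs, hs3]
    by_cases hshare : ∃ p ∈ B, p ∈ s.erase c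
    · -- filter empty
      obtain ⟨p, hpB, hps⟩ := hshare
      have : W.filter (fun C' => P s C') = ∅ := by
        rw [Finset.filter_eq_empty_iff]
        intro C' hC'
        obtain ⟨hBC', hC'M, -⟩ := hWmem C' hC'
        intro hP
        rcases hP with ⟨-, hall⟩ | ⟨hns, -⟩
        · exact hall p (hBC' hpB) hps
        · exact hns hcs
      rw [this, Finset.card_empty]
      exact Nat.zero_le _
    · -- injection into powersetCard (3-k) of a (4-k)-set
      push_neg at hshare
      have hseM : s.erase c ⊆ Finset.univ.erase c \ B := by
        intro x hx
        rw [Finset.mem_sdiff]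
        exact ⟨Finset.mem_erase.mpr ⟨(Finset.mem_erase.mp hx).1, Finset.mem_univ x⟩,
          fun hxB => hshare x hxB hx⟩
      have htarget : ((Finset.univ.erase c \ B) \ s.erase c).card = 4 - k := by
        rw [Finset.card_sdiff_of_subset hseM, hMBcard, hse2]
        omega
      have hinj : ((W.filter (fun C' => P s C')).image (fun C' => C' \ B)).card
          = (W.filter (fun C' => P s C')).card := by
        apply Finset.card_image_of_injOn
        intro x hx y hy hxy
        rw [Finset.mem_coe, Finset.mem_filter] at hx hy
        obtain ⟨hBx, -, -⟩ := hWmem x hx.1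
        obtain ⟨hBy, -, -⟩ := hWmem y hy.1
        calc x = (x \ B) ∪ B := by rw [Finset.sdiff_union_of_subset hBx]
          _ = (y \ B) ∪ B := by rw [show x \ B = y \ B from hxy]
          _ = y := Finset.sdiff_union_of_subset hBy
      have himg : (W.filter (fun C' => P s C')).image (fun C' => C' \ B)
          ⊆ ((Finset.univ.erase c \ B) \ s.erase c).powersetCard (3 - k) := by
        intro y hy
        rw [Finset.mem_image] at hy
        obtain ⟨C', hC', rfl⟩ := hy
        rw [Finset.mem_filter] at hC'
        obtain ⟨hCW, hP⟩ := hC'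
        obtain ⟨hBC', hC'M, hC'3⟩ := hWmem C' hCW
        have hPl : c ∈ s ∧ ∀ x ∈ C', x ∉ s.erase c := by
          rcases hP with h | ⟨hns, -⟩
          · exact h
          · exact absurd hcs hns
        rw [Finset.mem_powersetCard]
        constructor
        · intro x hx
          rw [Finset.mem_sdiff] at hx ⊢
          rw [Finset.mem_sdiff]
          exact ⟨⟨hC'M hx.1, hx.2⟩, hPl.2 x hx.1⟩
        · rw [Finset.card_sdiff_of_subset hBC', hC'3, hBcard]
      calc (W.filter (fun C' => P s C')).card
          = ((W.filter (fun C' => P s C')).image (fun C' => C' \ B)).card := hinj.symm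
        _ ≤ (((Finset.univ.erase c \ B) \ s.erase c).powersetCard (3 - k)).card :=
            Finset.card_le_card himg
        _ = (4 - k).choose (3 - k) := by rw [Finset.card_powersetCard, htarget]
        _ = cap k := by interval_cases k <;> decide
  have hbound_out : ∀ s ∈ (F3 A).filter (fun s => c ∉ s),
      (W.filter (fun C' => P s C')).card ≤ 1 := by
    intro s hs
    rw [Finset.mem_filter] at hs
    apply Finset.card_le_one.mpr
    intro a ha b hb
    rw [Finset.mem_filter] at ha hb
    have ha' : a = s := by
      rcases ha.2 with ⟨hcs, -⟩ | ⟨-, h⟩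
      · exact absurd hcs hs.2
      · exact h
    have hb' : b = s := by
      rcases hb.2 with ⟨hcs, -⟩ | ⟨-, h⟩
      · exact absurd hcs hs.2
      · exact h
    rw [ha', hb']
  -- combine
  have hsplit : ∑ s ∈ F3 A, (W.filter (fun C' => P s C')).card
      = ∑ s ∈ (F3 A).filter (fun s => c ∈ s), (W.filter (fun C' => P s C')).card
      + ∑ s ∈ (F3 A).filter (fun s => c ∉ s), (W.filter (fun C' => P s C')).card :=
    (Finset.sum_filter_add_sum_filter_not _ _ _).symm
  have h1 : ∑ s ∈ (F3 A).filter (fun s => c ∈ s), (W.filter (fun C' => P s C')).card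
      ≤ cap k * fc A c := by
    calc ∑ s ∈ (F3 A).filter (fun s => c ∈ s), (W.filter (fun C' => P s C')).card
        ≤ ∑ _s ∈ (F3 A).filter (fun s => c ∈ s), cap k := Finset.sum_le_sum hbound_in
      _ = cap k * fc A c := by rw [Finset.sum_const, smul_eq_mul, Nat.mul_comm]; rfl
  have h2 : ∑ s ∈ (F3 A).filter (fun s => c ∉ s), (W.filter (fun C' => P s C')).card
      ≤ gc A c := by
    calc ∑ s ∈ (F3 A).filter (fun s => c ∉ s), (W.filter (fun C' => P s C')).card
        ≤ ∑ _s ∈ (F3 A).filter (fun s => c ∉ s), 1 := Finset.sum_le_sum hbound_out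
      _ = gc A c := by rw [Finset.sum_const, smul_eq_mul, Nat.mul_one]; rfl
  rw [← hWcard]
  omega



end SHF16

theorem stmt16 (A : Fin 8 → Fin 7 → Bool) (hA : IsSHF 8 7 3 A)
    (hstd : StandardForm A) :
    7 ≤ (Finset.univ.filter fun r : Fin 8 => rowType A r = 1).card := by
  classical
  open SHF16 in
  by_contra hcon
  push_neg at hcon
  have hn1 : (Finset.univ.filter fun r : Fin 8 => rowType A r = 1).card ≤ 6 := by omega
  set n1 := (Finset.univ.filter fun r : Fin 8 => rowType A r = 1).card with hn1def
  set e := (E A).card with hedef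
  set f := (F3 A).card with hfdef
  set d := (D A).card with hddef
  -- 7 = good + bad
  have hgb : (Finset.univ.filter (good A)).card + d = 7 := by
    rw [hddef, D]
    rw [Finset.card_filter_add_card_filter_not]
    simp
  have hgle := good_card_le A
  have hbudget := budget A
  have hdn1 : 7 ≤ d + n1 := by omega
  have hef : n1 + e + f ≤ 8 := hbudget
  -- sums over all columns
  have hsec : ∑ c, ec A c = 2 * e := sum_ec A
  have hsfc : ∑ c, fc A c = 3 * f := sum_fc A
  have hsecD : ∑ c ∈ D A, ec A c ≤ 2 * e := by
    rw [← hsec]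
    exact Finset.sum_le_sum_of_subset (Finset.subset_univ _)
  have hsfcD : ∑ c ∈ D A, fc A c ≤ 3 * f := by
    rw [← hsfc]
    exact Finset.sum_le_sum_of_subset (Finset.subset_univ _)
  -- nested filters by value of ec
  set T0 := (D A).filter (fun c => ec A c = 0) with hT0
  set R0 := (D A).filter (fun c => ¬ ec A c = 0) with hR0
  set T1 := R0.filter (fun c => ec A c = 1) with hT1
  set R1 := R0.filter (fun c => ¬ ec A c = 1) with hR1
  set T2 := R1.filter (fun c => ec A c = 2) with hT2
  set R2 := R1.filter (fun c => ¬ ec A c = 2) with hR2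
  set T3 := R2.filter (fun c => ec A c = 3) with hT3
  set R3 := R2.filter (fun c => ¬ ec A c = 3) with hR3
  have hc0 : T0.card + R0.card = d := Finset.card_filter_add_card_filter_not _
  have hc1 : T1.card + R1.card = R0.card := Finset.card_filter_add_card_filter_not _
  have hc2 : T2.card + R2.card = R1.card := Finset.card_filter_add_card_filter_not _
  have hc3 : T3.card + R3.card = R2.card := Finset.card_filter_add_card_filter_not _
  -- membership facts
  have hmemD : ∀ c ∈ D A, ¬ good A c := by
    intro c hc
    rw [D, Finset.mem_filter] at hc
    exact hc.2
  have hT0mem : ∀ c ∈ T0, c ∈ D A ∧ ec A c = 0 := fun c hc => by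
    rw [hT0, Finset.mem_filter] at hc; exact hc
  have hT1mem : ∀ c ∈ T1, c ∈ D A ∧ ec A c = 1 := fun c hc => by
    rw [hT1, Finset.mem_filter, hR0, Finset.mem_filter] at hc
    exact ⟨hc.1.1, hc.2⟩
  have hT2mem : ∀ c ∈ T2, c ∈ D A ∧ ec A c = 2 := fun c hc => by
    rw [hT2, Finset.mem_filter, hR1, Finset.mem_filter, hR0, Finset.mem_filter] at hc
    exact ⟨hc.1.1.1, hc.2⟩
  have hT3mem : ∀ c ∈ T3, c ∈ D A ∧ ec A c = 3 := fun c hc => by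
    rw [hT3, Finset.mem_filter, hR2, Finset.mem_filter, hR1, Finset.mem_filter,
      hR0, Finset.mem_filter] at hc
    exact ⟨hc.1.1.1.1, hc.2⟩
  have hR3mem : ∀ c ∈ R3, c ∈ D A ∧ 4 ≤ ec A c := fun c hc => by
    rw [hR3, Finset.mem_filter, hR2, Finset.mem_filter, hR1, Finset.mem_filter,
      hR0, Finset.mem_filter] at hc
    refine ⟨hc.1.1.1.1, ?_⟩
    have h0 := hc.1.1.1.2
    have h1 := hc.1.1.2
    have h2 := hc.1.2
    have h3 := hc.2
    omega
  have hecle : ∀ c, ec A c ≤ e := fun c => Finset.card_filter_le _ _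
  -- per-column inequalities summed over each class
  have hsum0 : 20 * T0.card ≤ 4 * (∑ c ∈ T0, fc A c) + (∑ c ∈ T0, gc A c) := by
    have hpc : ∀ c ∈ T0, 20 ≤ 4 * fc A c + gc A c := by
      intro c hc
      obtain ⟨hcD, hce⟩ := hT0mem c hc
      have := percol hA hstd c (hmemD c hcD) (by omega)
      rw [hce] at this
      exact this
    calc 20 * T0.card = T0.card • 20 := by rw [smul_eq_mul, Nat.mul_comm]
      _ ≤ ∑ c ∈ T0, (4 * fc A c + gc A c) := Finset.card_nsmul_le_sum _ _ _ hpc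
      _ = 4 * (∑ c ∈ T0, fc A c) + (∑ c ∈ T0, gc A c) := by
          rw [Finset.sum_add_distrib, Finset.mul_sum]
  have hsum1 : 10 * T1.card ≤ 3 * (∑ c ∈ T1, fc A c) + (∑ c ∈ T1, gc A c) := by
    have hpc : ∀ c ∈ T1, 10 ≤ 3 * fc A c + gc A c := by
      intro c hc
      obtain ⟨hcD, hce⟩ := hT1mem c hc
      have := percol hA hstd c (hmemD c hcD) (by omega)
      rw [hce] at this
      exact this
    calc 10 * T1.card = T1.card • 10 := by rw [smul_eq_mul, Nat.mul_comm]
      _ ≤ ∑ c ∈ T1, (3 * fc A c + gc A c) := Finset.card_nsmul_le_sum _ _ _ hpc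
      _ = 3 * (∑ c ∈ T1, fc A c) + (∑ c ∈ T1, gc A c) := by
          rw [Finset.sum_add_distrib, Finset.mul_sum]
  have hsum2 : 4 * T2.card ≤ 2 * (∑ c ∈ T2, fc A c) + (∑ c ∈ T2, gc A c) := by
    have hpc : ∀ c ∈ T2, 4 ≤ 2 * fc A c + gc A c := by
      intro c hc
      obtain ⟨hcD, hce⟩ := hT2mem c hc
      have := percol hA hstd c (hmemD c hcD) (by omega)
      rw [hce] at this
      exact this
    calc 4 * T2.card = T2.card • 4 := by rw [smul_eq_mul, Nat.mul_comm]
      _ ≤ ∑ c ∈ T2, (2 * fc A c + gc A c) := Finset.card_nsmul_le_sum _ _ _ hpc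
      _ = 2 * (∑ c ∈ T2, fc A c) + (∑ c ∈ T2, gc A c) := by
          rw [Finset.sum_add_distrib, Finset.mul_sum]
  -- fc + gc = f pointwise
  have hfg : ∀ c : Fin 7, fc A c + gc A c = f := fun c => fc_add_gc A c
  have hFG0 : (∑ c ∈ T0, fc A c) + (∑ c ∈ T0, gc A c) = f * T0.card := by
    rw [← Finset.sum_add_distrib, Finset.sum_congr rfl (fun c _ => hfg c),
      Finset.sum_const, smul_eq_mul, Nat.mul_comm]
  have hFG1 : (∑ c ∈ T1, fc A c) + (∑ c ∈ T1, gc A c) = f * T1.card := by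
    rw [← Finset.sum_add_distrib, Finset.sum_congr rfl (fun c _ => hfg c),
      Finset.sum_const, smul_eq_mul, Nat.mul_comm]
  have hFG2 : (∑ c ∈ T2, fc A c) + (∑ c ∈ T2, gc A c) = f * T2.card := by
    rw [← Finset.sum_add_distrib, Finset.sum_congr rfl (fun c _ => hfg c),
      Finset.sum_const, smul_eq_mul, Nat.mul_comm]
  -- nonempty classes force lower bounds on e and f
  have hT3f : T3.card = 0 ∨ (1 ≤ f ∧ 3 ≤ e) := by
    rcases Finset.eq_empty_or_nonempty T3 with h | ⟨c, hc⟩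
    · left; rw [h]; rfl
    · right
      obtain ⟨hcD, hce⟩ := hT3mem c hc
      have hp := percol hA hstd c (hmemD c hcD) (by omega)
      rw [hce] at hp
      have h1 := hfg c
      have h2 := hecle c
      have h3 : uu 3 = 1 := rfl
      have h4 : cap 3 = 1 := rfl
      rw [h3, h4] at hp
      omega
  have hR3e : R3.card = 0 ∨ 4 ≤ e := by
    rcases Finset.eq_empty_or_nonempty R3 with h | ⟨c, hc⟩
    · left; rw [h]; rfl
    · right
      obtain ⟨-, hce⟩ := hR3mem c hc
      have := hecle c
      omega
  have hT2e : T2.card = 0 ∨ 2 ≤ e := by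
    rcases Finset.eq_empty_or_nonempty T2 with h | ⟨c, hc⟩
    · left; rw [h]; rfl
    · right
      obtain ⟨-, hce⟩ := hT2mem c hc
      have := hecle c
      omega
  have hT1e : T1.card = 0 ∨ 1 ≤ e := by
    rcases Finset.eq_empty_or_nonempty T1 with h | ⟨c, hc⟩
    · left; rw [h]; rfl
    · right
      obtain ⟨-, hce⟩ := hT1mem c hc
      have := hecle c
      omega
  -- sum of ec over D decomposition
  have hdec0 : ∑ c ∈ D A, ec A c = ∑ c ∈ T0, ec A c + ∑ c ∈ R0, ec A c :=
    (Finset.sum_filter_add_sum_filter_not _ _ _).symm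
  have hdec1 : ∑ c ∈ R0, ec A c = ∑ c ∈ T1, ec A c + ∑ c ∈ R1, ec A c :=
    (Finset.sum_filter_add_sum_filter_not _ _ _).symm
  have hdec2 : ∑ c ∈ R1, ec A c = ∑ c ∈ T2, ec A c + ∑ c ∈ R2, ec A c :=
    (Finset.sum_filter_add_sum_filter_not _ _ _).symm
  have hdec3 : ∑ c ∈ R2, ec A c = ∑ c ∈ T3, ec A c + ∑ c ∈ R3, ec A c :=
    (Finset.sum_filter_add_sum_filter_not _ _ _).symm
  have hT1sum : ∑ c ∈ T1, ec A c = T1.card := by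
    rw [Finset.sum_congr rfl (fun c hc => (hT1mem c hc).2), Finset.sum_const, smul_eq_mul,
      Nat.mul_one]
  have hT2sum : ∑ c ∈ T2, ec A c = 2 * T2.card := by
    rw [Finset.sum_congr rfl (fun c hc => (hT2mem c hc).2), Finset.sum_const, smul_eq_mul,
      Nat.mul_comm]
  have hT3sum : ∑ c ∈ T3, ec A c = 3 * T3.card := by
    rw [Finset.sum_congr rfl (fun c hc => (hT3mem c hc).2), Finset.sum_const, smul_eq_mul,
      Nat.mul_comm]
  have hR3sum : 4 * R3.card ≤ ∑ c ∈ R3, ec A c := by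
    calc 4 * R3.card = R3.card • 4 := by rw [smul_eq_mul, Nat.mul_comm]
      _ ≤ ∑ c ∈ R3, ec A c := Finset.card_nsmul_le_sum _ _ _ (fun c hc => (hR3mem c hc).2)
  -- sum of fc over D decomposition
  have hfdec0 : ∑ c ∈ D A, fc A c = ∑ c ∈ T0, fc A c + ∑ c ∈ R0, fc A c :=
    (Finset.sum_filter_add_sum_filter_not _ _ _).symm
  have hfdec1 : ∑ c ∈ R0, fc A c = ∑ c ∈ T1, fc A c + ∑ c ∈ R1, fc A c :=
    (Finset.sum_filter_add_sum_filter_not _ _ _).symm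
  have hfdec2 : ∑ c ∈ R1, fc A c = ∑ c ∈ T2, fc A c + ∑ c ∈ R2, fc A c :=
    (Finset.sum_filter_add_sum_filter_not _ _ _).symm
  -- final arithmetic
  have hf8 : f ≤ 8 := by omega
  have hd7 : d ≤ 7 := by omega
  interval_cases f <;> omega
end
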